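/- Let D and D̂ be positive diagonal n×n matrices and A a symmetric matrix with ‖D^{-1}‖·‖A‖ ≤ 1 (equivalently ‖D^{-1}A‖ ≤ 1). If ‖A − Â‖ ≤ Δ_A, ‖D − D̂‖ ≤ Δ_D, and every diagonal entry of D̂ equals d̄ > 0 with |D_{jj} − d̄| ≤ Δ_D < d̄ for all j, then ‖D^{-1/2}AD^{-1/2} − D̂^{-1/2}ÂD̂^{-1/2}‖ ≤ Δ_A/d̄ + 2Δ_D/d̄ + Δ_D²/d̄². -/

import Mathlib

open Matrix

/-- The spectral (ℓ²-operator) norm of a square real matrix. -/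
noncomputable def specNorm {n : ℕ} (A : Matrix (Fin n) (Fin n) ℝ) : ℝ :=
  ‖Matrix.toEuclideanCLM (𝕜 := ℝ) A‖

/-!
Write `S = D^{-1/2}`, `c = d̄^{-1/2}` and `E = S - c I`. Then
`S A S - c² Â = E A E + c (E A + A E) + c² (A - Â)`, and the three groups of terms give the
three summands of the bound. The only delicate point is `E`, whose entries
`d_j^{-1/2} - d̄^{-1/2}` are not small when `d_j` is small; but `‖D⁻¹‖ ‖A‖ ≤ 1` says
`‖A‖ ≤ d_j` for every `j`, and this is exactly what is needed to control `‖A‖^{1/2} |E_jj|`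
and `‖A‖ |E_jj|`.
-/

open scoped Matrix.Norms.L2Operator

theorem specNorm_eq_norm {n : ℕ} (A : Matrix (Fin n) (Fin n) ℝ) : specNorm A = ‖A‖ := rfl

theorem abs_inv_sqrt_sub_inv_sqrt {x b : ℝ} (hx : 0 < x) (hb : 0 < b) :
    |(√x)⁻¹ - (√b)⁻¹| = |x - b| / (√x * √b * (√x + √b)) := by
  have hsx := Real.sqrt_pos.2 hx
  have hsb := Real.sqrt_pos.2 hb
  have h : (√x)⁻¹ - (√b)⁻¹ = (b - x) / (√x * √b * (√x + √b)) := by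
    field_simp
    linear_combination Real.sq_sqrt hb.le - Real.sq_sqrt hx.le
  rw [h, abs_div, abs_of_pos (by positivity : 0 < √x * √b * (√x + √b)), abs_sub_comm]

theorem sqrt_mul_abs_inv_sqrt_sub_inv_sqrt_le {a x b : ℝ} (hax : a ≤ x)
    (hx : 0 < x) (hb : 0 < b) : √a * |(√x)⁻¹ - (√b)⁻¹| ≤ |x - b| / b := by
  have hsx := Real.sqrt_pos.2 hx
  have hsb := Real.sqrt_pos.2 hb
  rw [abs_inv_sqrt_sub_inv_sqrt hx hb, mul_div_assoc', div_le_div_iff₀ (by positivity) hb]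
  have : b ≤ √b * (√x + √b) := by nlinarith [Real.mul_self_sqrt hb.le]
  calc √a * |x - b| * b ≤ √x * |x - b| * (√b * (√x + √b)) := by
        gcongr
    _ = _ := by ring

theorem mul_abs_inv_sqrt_sub_inv_sqrt_le {a x b : ℝ} (hax : a ≤ x)
    (hx : 0 < x) (hb : 0 < b) : a * |(√x)⁻¹ - (√b)⁻¹| ≤ |x - b| / √b := by
  have hsx := Real.sqrt_pos.2 hx
  have hsb := Real.sqrt_pos.2 hb
  rw [abs_inv_sqrt_sub_inv_sqrt hx hb, mul_div_assoc', div_le_div_iff₀ (by positivity) hsb]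
  have : x ≤ √x * (√x + √b) := by nlinarith [Real.mul_self_sqrt hx.le]
  calc a * |x - b| * √b ≤ x * |x - b| * √b := by gcongr
    _ ≤ √x * (√x + √b) * |x - b| * √b := by gcongr
    _ = _ := by ring

theorem norm_mul_mul_sub_algebraMap_le {R : Type*} [SeminormedRing R] [NormedAlgebra ℝ R]
    (S A Ahat : R) (c : ℝ) :
    ‖S * A * S - algebraMap ℝ R c * Ahat * algebraMap ℝ R c‖ ≤
      ‖S - algebraMap ℝ R c‖ ^ 2 * ‖A‖ + 2 * |c| * (‖S - algebraMap ℝ R c‖ * ‖A‖) +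
        c ^ 2 * ‖A - Ahat‖ := by
  set E := S - algebraMap ℝ R c
  have hS : S = E + algebraMap ℝ R c := (sub_add_cancel S _).symm
  have key : S * A * S - algebraMap ℝ R c * Ahat * algebraMap ℝ R c
      = E * A * E + c • (E * A) + c • (A * E) + c ^ 2 • (A - Ahat) := by
    rw [hS]
    simp only [Algebra.algebraMap_eq_smul_one, add_mul, mul_add, smul_mul_assoc, mul_smul_comm,
      one_mul, mul_one, smul_add, smul_sub, smul_smul, sq]
    abel
  have hEAE : ‖E * A * E‖ ≤ ‖E‖ ^ 2 * ‖A‖ := by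
    calc ‖E * A * E‖ ≤ ‖E‖ * ‖A‖ * ‖E‖ := norm_mul₃_le
      _ = ‖E‖ ^ 2 * ‖A‖ := by ring
  have hEA : ‖c • (E * A)‖ ≤ |c| * (‖E‖ * ‖A‖) := by
    rw [norm_smul, Real.norm_eq_abs]; gcongr; exact norm_mul_le _ _
  have hAE : ‖c • (A * E)‖ ≤ |c| * (‖E‖ * ‖A‖) := by
    rw [norm_smul, Real.norm_eq_abs, mul_comm ‖E‖]; gcongr; exact norm_mul_le _ _
  have hAA : ‖c ^ 2 • (A - Ahat)‖ = c ^ 2 * ‖A - Ahat‖ := by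
    rw [norm_smul, Real.norm_eq_abs, abs_of_nonneg (sq_nonneg c)]
  rw [key]
  calc _ ≤ ‖E * A * E‖ + ‖c • (E * A)‖ + ‖c • (A * E)‖ + ‖c ^ 2 • (A - Ahat)‖ := norm_add₄_le
    _ ≤ _ := by linarith

theorem mul_norm_diagonal_le {ι 𝕜 : Type*} [Fintype ι] [DecidableEq ι] [RCLike 𝕜]
    {v : ι → 𝕜} {k C : ℝ} (hk : 0 ≤ k) (hC : 0 ≤ C) (h : ∀ i, k * ‖v i‖ ≤ C) :
    k * ‖(diagonal v : Matrix ι ι 𝕜)‖ ≤ C := by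
  rw [l2_opNorm_diagonal, ← abs_of_nonneg hk, ← Real.norm_eq_abs, ← norm_smul]
  refine (pi_norm_le_iff_of_nonneg hC).2 fun i => ?_
  simpa [norm_smul, abs_of_nonneg hk] using h i

theorem le_of_norm_inv_diagonal_mul_le_one {ι : Type*} [Fintype ι] [DecidableEq ι]
    {d : ι → ℝ} (hd : ∀ i, 0 < d i) {a : ℝ} (ha : 0 ≤ a)
    (h : ‖(diagonal d)⁻¹‖ * a ≤ 1) (i : ι) : a ≤ d i := by
  have hinv : (diagonal d)⁻¹ = diagonal d⁻¹ := by
    refine inv_eq_left_inv ?_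
    rw [diagonal_mul_diagonal, ← diagonal_one]
    congr 1; ext j; simp [(hd j).ne']
  have hi : (d i)⁻¹ ≤ ‖(diagonal d)⁻¹‖ := by
    rw [hinv, l2_opNorm_diagonal]
    simpa [abs_of_pos (hd i)] using norm_le_pi_norm d⁻¹ i
  rw [← inv_mul_le_one₀ (hd i)]
  exact (mul_le_mul_of_nonneg_right hi ha).trans h

section InvSqrtDiagonal

variable {ι : Type*} [Fintype ι] [DecidableEq ι] {d : ι → ℝ} {a b Δ : ℝ}

theorem sqrt_mul_norm_diagonal_inv_sqrt_sub_le (hd : ∀ i, 0 < d i) (hb : 0 < b) (hΔ : 0 ≤ Δ)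
    (had : ∀ i, a ≤ d i) (hdb : ∀ i, |d i - b| ≤ Δ) :
    √a * ‖(diagonal fun i => (√(d i))⁻¹ - (√b)⁻¹ : Matrix ι ι ℝ)‖ ≤ Δ / b :=
  mul_norm_diagonal_le (Real.sqrt_nonneg a) (by positivity) fun i =>
    (sqrt_mul_abs_inv_sqrt_sub_inv_sqrt_le (had i) (hd i) hb).trans (by gcongr; exact hdb i)

theorem mul_norm_diagonal_inv_sqrt_sub_le (hd : ∀ i, 0 < d i) (hb : 0 < b) (hΔ : 0 ≤ Δ)
    (ha : 0 ≤ a) (had : ∀ i, a ≤ d i) (hdb : ∀ i, |d i - b| ≤ Δ) :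
    a * ‖(diagonal fun i => (√(d i))⁻¹ - (√b)⁻¹ : Matrix ι ι ℝ)‖ ≤ Δ / √b :=
  mul_norm_diagonal_le ha (by positivity) fun i =>
    (mul_abs_inv_sqrt_sub_inv_sqrt_le (had i) (hd i) hb).trans (by gcongr; exact hdb i)

end InvSqrtDiagonal

theorem normalized_laplacian_perturbation_general {n : ℕ}
    (dD : Fin n → ℝ) (dbar ΔA ΔD : ℝ)
    (hdD : ∀ j, 0 < dD j) (hdbar : 0 < dbar)
    (A Ahat : Matrix (Fin n) (Fin n) ℝ)
    (hDA : specNorm (Matrix.diagonal dD)⁻¹ * specNorm A ≤ 1)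
    (hΔA : specNorm (A - Ahat) ≤ ΔA)
    (hΔD : specNorm (Matrix.diagonal dD - Matrix.diagonal fun _ => dbar) ≤ ΔD)
    (hentry : ∀ j, |dD j - dbar| ≤ ΔD) :
    specNorm
        (Matrix.diagonal (fun j => (Real.sqrt (dD j))⁻¹) * A *
            Matrix.diagonal (fun j => (Real.sqrt (dD j))⁻¹)
          - Matrix.diagonal (fun _ => (Real.sqrt dbar)⁻¹) * Ahat *
              Matrix.diagonal (fun _ => (Real.sqrt dbar)⁻¹))
      ≤ ΔA / dbar + 2 * ΔD / dbar + ΔD ^ 2 / dbar ^ 2 := by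
  simp only [specNorm_eq_norm] at hDA hΔA hΔD ⊢
  have hΔD0 : 0 ≤ ΔD := (norm_nonneg _).trans hΔD
  have hA_le := le_of_norm_inv_diagonal_mul_le_one hdD (norm_nonneg A) hDA
  set E : Matrix (Fin n) (Fin n) ℝ := diagonal fun j => (√(dD j))⁻¹ - (√dbar)⁻¹
  have hsqrtAE : √‖A‖ * ‖E‖ ≤ ΔD / dbar :=
    sqrt_mul_norm_diagonal_inv_sqrt_sub_le hdD hdbar hΔD0 hA_le hentry
  have hAE : ‖A‖ * ‖E‖ ≤ ΔD / √dbar :=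
    mul_norm_diagonal_inv_sqrt_sub_le hdD hdbar hΔD0 (norm_nonneg A) hA_le hentry
  have h := norm_mul_mul_sub_algebraMap_le (diagonal fun j => (√(dD j))⁻¹) A Ahat (√dbar)⁻¹
  rw [show diagonal (fun j => (√(dD j))⁻¹) - algebraMap ℝ _ (√dbar)⁻¹ = E from
    diagonal_sub _ _] at h
  calc _ ≤ _ := h
    _ = (√‖A‖ * ‖E‖) ^ 2 + 2 * (‖A‖ * ‖E‖ / √dbar) + ‖A - Ahat‖ / dbar := by
      rw [abs_of_pos (by positivity), inv_pow, Real.sq_sqrt hdbar.le, mul_pow,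
        Real.sq_sqrt (norm_nonneg A)]
      ring
    _ ≤ (ΔD / dbar) ^ 2 + 2 * (ΔD / √dbar / √dbar) + ΔA / dbar := by gcongr
    _ = _ := by
      rw [div_div, Real.mul_self_sqrt hdbar.le]
      ring

/-- Deterministic normalized-Laplacian perturbation bound: if `D = diag(d_j)` is
positive diagonal, `D̂ = d̄ I` with `d̄ > 0`, `A, Â` are symmetric with
`‖D⁻¹‖·‖A‖ ≤ 1`, `‖A - Â‖ ≤ Δ_A`, `‖D - D̂‖ ≤ Δ_D`, `|d_j - d̄| ≤ Δ_D < d̄`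
for all `j`, then
`‖D^{-1/2} A D^{-1/2} - D̂^{-1/2} Â D̂^{-1/2}‖ ≤ Δ_A/d̄ + 2Δ_D/d̄ + Δ_D²/d̄²`. -/
theorem normalized_laplacian_perturbation {n : ℕ}
    (dD : Fin n → ℝ) (dbar ΔA ΔD : ℝ)
    (hdD : ∀ j, 0 < dD j) (hdbar : 0 < dbar)
    (A Ahat : Matrix (Fin n) (Fin n) ℝ) (hA : A.IsSymm) (hAhat : Ahat.IsSymm)
    (hDA : specNorm (Matrix.diagonal dD)⁻¹ * specNorm A ≤ 1)
    (hΔA : specNorm (A - Ahat) ≤ ΔA)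
    (hΔD : specNorm (Matrix.diagonal dD - Matrix.diagonal fun _ => dbar) ≤ ΔD)
    (hentry : ∀ j, |dD j - dbar| ≤ ΔD) (hΔDlt : ΔD < dbar) :
    specNorm
        (Matrix.diagonal (fun j => (Real.sqrt (dD j))⁻¹) * A *
            Matrix.diagonal (fun j => (Real.sqrt (dD j))⁻¹)
          - Matrix.diagonal (fun _ => (Real.sqrt dbar)⁻¹) * Ahat *
              Matrix.diagonal (fun _ => (Real.sqrt dbar)⁻¹))
      ≤ ΔA / dbar + 2 * ΔD / dbar + ΔD ^ 2 / dbar ^ 2 :=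
  normalized_laplacian_perturbation_general dD dbar ΔA ΔD hdD hdbar A Ahat hDA hΔA hΔD hentry
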